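/- A push in direction d from the king's square is winning for a given equivalence class if and only if: the farthest square of the line L (from the king to the boundary in direction d) contains an opponent piece, there is no side rail at the far end of L, no square of L contains the anchored king, and for every connected component R of the pawnspace, |L ∩ R| is at most the number of the current player's pawns in R. -/

import Mathlib

abbrev Sq := ℤ × ℤ

def dirVec : Fin 4 → Sq := ![(1, 0), (-1, 0), (0, 1), (0, -1)]

def adjSq (a b : Sq) : Prop := (a.1 - b.1).natAbs + (a.2 - b.2).natAbs = 1

def reachIn (T : Set Sq) (a b : Sq) : Prop :=
  a ∈ T ∧ b ∈ T ∧ Relation.ReflTransGen (fun x y => adjSq x y ∧ x ∈ T ∧ y ∈ T) a b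

/-- The connected component of `s` in the set `T`. -/
def component (T : Set Sq) (s : Sq) : Set Sq := {t | reachIn T s t}

lemma adjSq_symm {a b : Sq} (h : adjSq a b) : adjSq b a := by
  unfold adjSq at *; omega

lemma component_subset (T : Set Sq) (s : Sq) : component T s ⊆ T :=
  fun _ h => h.2.1

lemma mem_component_self {T : Set Sq} {s : Sq} (hs : s ∈ T) : s ∈ component T s :=
  ⟨hs, hs, Relation.ReflTransGen.refl⟩

lemma component_eq_of_mem {T : Set Sq} {s x : Sq} (hx : x ∈ component T s) :
    component T x = component T s := by
  have hsym : Symmetric (fun x y : Sq => adjSq x y ∧ x ∈ T ∧ y ∈ T) :=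
    fun a b h => ⟨adjSq_symm h.1, h.2.2, h.2.1⟩
  have hxs : Relation.ReflTransGen (fun x y : Sq => adjSq x y ∧ x ∈ T ∧ y ∈ T) x s :=
    (haveI : Std.Symm (fun x y : Sq => adjSq x y ∧ x ∈ T ∧ y ∈ T) := ⟨hsym⟩; Std.Symm.symm _ _ hx.2.2)
  ext t
  constructor
  · rintro ⟨hxT, htT, hxt⟩
    exact ⟨hx.1, htT, hx.2.2.trans hxt⟩
  · rintro ⟨hsT, htT, hst⟩
    exact ⟨hx.2.1, htT, hxs.trans hst⟩

/-- fix a game state (board, opponent pieces `O`, rails, anchor)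
and an equivalence class of configurations given by the king position `kp` and
a reference pawn placement `P₀` (only the pawn counts per pawnspace component
matter).  Let `L` be the line of squares from the square adjacent to the king
in direction `d` to the board boundary (`L = {kp + j•d : 1 ≤ j ≤ m}`, with
`kp + (m+1)•d` off the board).  Then some configuration in the class admits a
winning push in direction `d` iff: the farthest square of `L` holds an
opponent piece; there is no side rail at the far end of `L`; no square of `L`
holds the anchored king; and for every component `R` of the pawnspace,
`|L ∩ R|` is at most the number of the current player's pawns in `R`. -/
theorem winning_class_iff (board O : Finset Sq) (rails : Finset (Sq × Fin 4))
    (anchor : Option Sq) (kp : Sq) (hO : (O : Set Sq) ⊆ (board : Set Sq))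
    (PS : Set Sq) (hPS : PS = {s : Sq | s ∈ board ∧ s ∉ O ∧ s ≠ kp})
    (d : Fin 4) (m : ℕ) (hm : 1 ≤ m)
    (hline : ∀ j : ℕ, 1 ≤ j → j ≤ m → kp + j • dirVec d ∈ board)
    (hend : kp + (m + 1) • dirVec d ∉ board)
    (L : Set Sq) (hL : L = {x : Sq | ∃ j : ℕ, 1 ≤ j ∧ j ≤ m ∧ x = kp + j • dirVec d})
    (P₀ : Set Sq) (hP₀ : P₀ ⊆ PS) :
    (∃ P ⊆ PS,
        (∀ s ∈ PS, (P ∩ component PS s).ncard = (P₀ ∩ component PS s).ncard) ∧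
        -- a winning push in direction `d` is available in configuration `P`:
        (∀ x ∈ L, x ∈ O ∨ x ∈ P) ∧
        kp + m • dirVec d ∈ O ∧
        (kp + m • dirVec d, d) ∉ rails ∧
        (∀ x ∈ L, anchor ≠ some x)) ↔
      (kp + m • dirVec d ∈ O ∧
        (kp + m • dirVec d, d) ∉ rails ∧
        (∀ x ∈ L, anchor ≠ some x) ∧
        (∀ s ∈ PS, (L ∩ component PS s).ncard ≤ (P₀ ∩ component PS s).ncard)) := by
  have hPSfin : PS.Finite := by
    rw [hPS]
    exact (board.finite_toSet).subset (fun x hx => hx.1)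
  -- membership of line squares in PS when not in O
  have hLPS : ∀ x ∈ L, x ∉ O → x ∈ PS := by
    intro x hx hxO
    rw [hL] at hx
    obtain ⟨j, hj1, hjm, rfl⟩ := hx
    rw [hPS]
    refine ⟨hline j hj1 hjm, hxO, ?_⟩
    intro h
    have h0 : (j : ℕ) • dirVec d = (0 : Sq) := by
      have h' : kp + (j : ℕ) • dirVec d = kp + (0 : Sq) := by simpa using h
      exact add_left_cancel h'
    have hj : j ≠ 0 := Nat.one_le_iff_ne_zero.mp hj1
    fin_cases d <;>
      simp [dirVec, Prod.ext_iff, Prod.smul_def, smul_eq_mul] at h0 <;> omega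
  constructor
  · rintro ⟨P, hPsub, hcnt, hcov, h1, h2, h3⟩
    refine ⟨h1, h2, h3, ?_⟩
    intro s hs
    rw [← hcnt s hs]
    apply Set.ncard_le_ncard _ ((hPSfin.subset (component_subset PS s)).inter_of_right P)
    rintro x ⟨hxL, hxc⟩
    have hxPS : x ∈ PS := component_subset PS s hxc
    have hxO : x ∉ O := by rw [hPS] at hxPS; exact hxPS.2.1
    rcases hcov x hxL with h | h
    · exact absurd h hxO
    · exact ⟨h, hxc⟩
  · rintro ⟨h1, h2, h3, hcnt⟩
    -- build P component by component
    classical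
    set Good : Set Sq → Set Sq → Prop :=
      fun R S => (L ∩ R ⊆ S) ∧ S ⊆ R ∧ S.ncard = (P₀ ∩ R).ncard with hGood
    set f : Set Sq → Set Sq := fun R => if h : ∃ S, Good R S then h.choose else ∅ with hf
    have hfgood : ∀ s ∈ PS, Good (component PS s) (f (component PS s)) := by
      intro s hs
      have hRfin : (component PS s).Finite := hPSfin.subset (component_subset PS s)
      have hex : ∃ S, Good (component PS s) S := by
        obtain ⟨S, hS1, hS2, hS3⟩ := Set.exists_subsuperset_card_eq
          (Set.inter_subset_right : L ∩ component PS s ⊆ component PS s)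
          (hcnt s hs)
          (Set.ncard_le_ncard Set.inter_subset_right hRfin)
        exact ⟨S, hS1, hS2, hS3⟩
      rw [hf]
      simp only [dif_pos hex]
      exact hex.choose_spec
    set P : Set Sq := {x | x ∈ PS ∧ x ∈ f (component PS x)} with hPdef
    have hPinter : ∀ s ∈ PS, P ∩ component PS s = f (component PS s) := by
      intro s hs
      ext x
      constructor
      · rintro ⟨⟨hxPS, hxf⟩, hxc⟩
        rwa [component_eq_of_mem hxc] at hxf
      · intro hxf
        have hxc : x ∈ component PS s := (hfgood s hs).2.1 hxf
        have hxPS : x ∈ PS := component_subset PS s hxc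
        refine ⟨⟨hxPS, ?_⟩, hxc⟩
        rwa [component_eq_of_mem hxc]
    refine ⟨P, fun x hx => hx.1, ?_, ?_, h1, h2, h3⟩
    · intro s hs
      rw [hPinter s hs, (hfgood s hs).2.2]
    · intro x hxL
      by_cases hxO : x ∈ O
      · exact Or.inl hxO
      right
      have hxPS : x ∈ PS := hLPS x hxL hxO
      have hxc : x ∈ component PS x := mem_component_self hxPS
      have : x ∈ f (component PS x) := (hfgood x hxPS).1 ⟨hxL, hxc⟩
      exact ⟨hxPS, this⟩
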